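/- Let Σ be an infinite set. There is no finite automaton model of the following kind recognizing the language {aa : a ∈ Σ}: a finite set of states Q, initial states I ⊆ Q, terminal states T ⊆ Q, and a finite set E of transitions (q, S, q') where S ⊆ Σ, accepting a word a₀⋯a_{m-1} iff there is a sequence of states q₀ ∈ I, …, q_m ∈ T with some (q_i, S, q_{i+1}) ∈ E satisfying a_i ∈ S for each i. Formally: for every such automaton A whose accepted language contains all words aa with a ∈ Σ, the accepted language of A also contains some word a₁a₂ with a₁ ≠ a₂. -/
import Mathlib


/-- A (nondeterministic, synchronous) automaton over a possibly infinite
alphabet `A`, whose finitely many transitions are labeled by subsets of `A`. -/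
structure SetAutomaton (A : Type*) where
  /-- the (finite) type of states -/
  Q : Type
  /-- the set of states is finite -/
  finQ : Fintype Q
  /-- the finite set of transitions `(q, S, q')`, `S ⊆ A` -/
  E : Finset (Q × Set A × Q)
  /-- initial states -/
  I : Set Q
  /-- terminal states -/
  T : Set Q

/-- The automaton `M` accepts the word `w` if there is a run, i.e. a sequence
of states starting in an initial state, ending in a terminal state, and such
that each letter of `w` is read through a transition whose label contains it. -/
def SetAutomaton.Accepts {A : Type*} (M : SetAutomaton A) (w : List A) : Prop :=
  ∃ r : Fin (w.length + 1) → M.Q,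
    r 0 ∈ M.I ∧ r (Fin.last w.length) ∈ M.T ∧
      ∀ i : Fin w.length, ∃ S : Set A,
        (r i.castSucc, S, r i.succ) ∈ M.E ∧ w.get i ∈ S

/-- The language accepted by the automaton `M`. -/
def SetAutomaton.lang {A : Type*} (M : SetAutomaton A) : Set (List A) :=
  {w | M.Accepts w}

/-- Over an infinite alphabet, no set-labeled finite automaton recognizes the
language `{aa : a ∈ Σ}`: any automaton accepting all words `aa` also accepts
some word `a₁a₂` with `a₁ ≠ a₂`. -/
theorem no_automaton_for_doubling {A : Type*} [Infinite A]
    (M : SetAutomaton A) (h : ∀ a : A, M.Accepts [a, a]) :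
    ∃ a₁ a₂ : A, a₁ ≠ a₂ ∧ M.Accepts [a₁, a₂] := by
  classical
  choose r hI hT hE using h
  choose S hS ha using hE
  simp only [List.length_cons, List.length_nil, List.get_eq_getElem] at r S hS ha
  let f : A → M.E × M.E := fun a =>
    (⟨(r a (0 : Fin 2).castSucc, S a 0, r a (0 : Fin 2).succ), hS a 0⟩,
     ⟨(r a (1 : Fin 2).castSucc, S a 1, r a (1 : Fin 2).succ), hS a 1⟩)
  obtain ⟨a, b, hab, hf⟩ := Finite.exists_ne_map_eq_of_infinite f
  refine ⟨a, b, hab, r a, hI a, hT a, ?_⟩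
  intro i
  fin_cases i
  · exact ⟨S a 0, hS a 0, ha a 0⟩
  · refine ⟨S a 1, hS a 1, ?_⟩
    have h2 : (f a).2 = (f b).2 := by rw [hf]
    have : S a 1 = S b 1 := congrArg (fun p => p.2.1) (Subtype.ext_iff.mp h2)
    rw [this]
    exact ha b 1
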